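/- Let R = R₁ × R₂, M = M₁ × M₂, S = S₁ × S₂, with δ_×(I₁×I₂) = δ₁(I₁)×δ₂(I₂) and φ_×(N₁×N₂) = φ₁(N₁)×φ₂(N₂). Let N₁ be a proper submodule of M₁ and suppose φ₂(M₂) = M₂. Then N₁ × M₂ is a φ_×-δ_×-S-primary submodule of M associated to (s₁,s₂) ∈ S if and only if N₁ is a φ₁-δ₁-S₁-primary submodule of M₁ associated to s₁ ∈ S₁. -/

import Mathlib

open Submodule

variable {R₁ R₂ M₁ M₂ : Type*} [CommRing R₁] [CommRing R₂]
  [AddCommGroup M₁] [Module R₁ M₁] [AddCommGroup M₂] [Module R₂ M₂]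

/-- `M₁` as a module over `R₁ × R₂` via the first projection. -/
instance modFst : Module (R₁ × R₂) M₁ := Module.compHom M₁ (RingHom.fst R₁ R₂)

/-- `M₂` as a module over `R₁ × R₂` via the second projection. -/
instance modSnd : Module (R₁ × R₂) M₂ := Module.compHom M₂ (RingHom.snd R₁ R₂)

/-- The product submodule `N₁ × N₂` of the `R₁ × R₂`-module `M₁ × M₂`. -/
def prodSubmodule (N₁ : Submodule R₁ M₁) (N₂ : Submodule R₂ M₂) :
    Submodule (R₁ × R₂) (M₁ × M₂) where
  carrier := N₁ ×ˢ N₂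
  add_mem' := fun hx hy => ⟨N₁.add_mem hx.1 hy.1, N₂.add_mem hx.2 hy.2⟩
  zero_mem' := ⟨N₁.zero_mem, N₂.zero_mem⟩
  smul_mem' := fun r x hx => ⟨N₁.smul_mem r.1 hx.1, N₂.smul_mem r.2 hx.2⟩

/-- `N` is a `φ`-`δ`-`S`-primary submodule associated to `s ∈ S` (generic form). -/
def IsPhiDeltaSPrimary {R : Type*} [CommRing R] {M : Type*} [AddCommGroup M] [Module R M]
    (δ : Ideal R → Ideal R) (φ : Submodule R M → Submodule R M)
    (S : Set R) (s : R) (N : Submodule R M) : Prop :=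
  N ≠ ⊤ ∧ ((δ (N.colon ⊤) : Set R) ∩ S = ∅) ∧ s ∈ S ∧
    ∀ (a : R) (m : M), a • m ∈ N → a • m ∉ φ N → s • m ∈ N ∨ s * a ∈ δ (N.colon ⊤)

lemma mem_prodSubmodule {N₁ : Submodule R₁ M₁} {N₂ : Submodule R₂ M₂} {x : M₁ × M₂} :
    x ∈ prodSubmodule N₁ N₂ ↔ x.1 ∈ N₁ ∧ x.2 ∈ N₂ := Iff.rfl

lemma prod_smul' (r : R₁ × R₂) (x : M₁ × M₂) : r • x = (r.1 • x.1, r.2 • x.2) := rfl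

lemma colon_prodSubmodule (N₁ : Submodule R₁ M₁) (N₂ : Submodule R₂ M₂) :
    (prodSubmodule N₁ N₂).colon ⊤ = (N₁.colon ⊤).prod (N₂.colon ⊤) := by
  ext r
  simp only [Submodule.mem_colon, Ideal.mem_prod, Submodule.mem_top, forall_true_left,
    mem_prodSubmodule, prod_smul']
  constructor
  · intro h
    exact ⟨fun m _ => (h (m, 0) trivial).1,
      fun m _ => (h (0, m) trivial).2⟩
  · intro h m _
    exact ⟨h.1 m.1 trivial, h.2 m.2 trivial⟩

theorem stmt18 (δ₁ : Ideal R₁ → Ideal R₁) (δ₂ : Ideal R₂ → Ideal R₂)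
    (φ₁ : Submodule R₁ M₁ → Submodule R₁ M₁) (φ₂ : Submodule R₂ M₂ → Submodule R₂ M₂)
    (hδ₁1 : ∀ I, I ≤ δ₁ I) (hδ₁2 : ∀ I J, I ≤ J → δ₁ I ≤ δ₁ J)
    (hδ₂1 : ∀ I, I ≤ δ₂ I) (hδ₂2 : ∀ I J, I ≤ J → δ₂ I ≤ δ₂ J)
    (hφ₁1 : ∀ P, φ₁ P ≤ P) (hφ₁2 : ∀ P Q, P ≤ Q → φ₁ P ≤ φ₁ Q)
    (hφ₂1 : ∀ P, φ₂ P ≤ P) (hφ₂2 : ∀ P Q, P ≤ Q → φ₂ P ≤ φ₂ Q)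
    (S₁ : Set R₁) (hS₁1 : (1 : R₁) ∈ S₁) (hS₁mul : ∀ a ∈ S₁, ∀ b ∈ S₁, a * b ∈ S₁)
    (S₂ : Set R₂) (hS₂1 : (1 : R₂) ∈ S₂) (hS₂mul : ∀ a ∈ S₂, ∀ b ∈ S₂, a * b ∈ S₂)
    (δx : Ideal (R₁ × R₂) → Ideal (R₁ × R₂))
    (φx : Submodule (R₁ × R₂) (M₁ × M₂) → Submodule (R₁ × R₂) (M₁ × M₂))
    (hδx : ∀ (I₁ : Ideal R₁) (I₂ : Ideal R₂),
      δx (I₁.prod I₂) = (δ₁ I₁).prod (δ₂ I₂))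
    (hφx : ∀ (N₁ : Submodule R₁ M₁) (N₂ : Submodule R₂ M₂),
      φx (prodSubmodule N₁ N₂) = prodSubmodule (φ₁ N₁) (φ₂ N₂))
    (N₁ : Submodule R₁ M₁) (hN₁ : N₁ ≠ ⊤) (hφ₂top : φ₂ (⊤ : Submodule R₂ M₂) = ⊤)
    (s₁ : R₁) (s₂ : R₂) (hs₁ : s₁ ∈ S₁) (hs₂ : s₂ ∈ S₂) :
    IsPhiDeltaSPrimary δx φx (S₁ ×ˢ S₂) (s₁, s₂) (prodSubmodule N₁ ⊤) ↔
      IsPhiDeltaSPrimary δ₁ φ₁ S₁ s₁ N₁ := by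
  have hcolon : (prodSubmodule N₁ (⊤ : Submodule R₂ M₂)).colon ⊤ =
      (N₁.colon ⊤).prod ((⊤ : Submodule R₂ M₂).colon ⊤) := colon_prodSubmodule N₁ ⊤
  have htopcolon : ((⊤ : Submodule R₂ M₂).colon ⊤) = (⊤ : Ideal R₂) := by
    ext r; simp [Submodule.mem_colon]
  have hδ2top : δ₂ (⊤ : Ideal R₂) = ⊤ := top_le_iff.mp (hδ₂1 ⊤)
  have hδcolon : δx ((prodSubmodule N₁ (⊤ : Submodule R₂ M₂)).colon ⊤) =
      (δ₁ (N₁.colon ⊤)).prod (⊤ : Ideal R₂) := by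
    rw [hcolon, htopcolon, hδx, hδ2top]
  have hφ : φx (prodSubmodule N₁ (⊤ : Submodule R₂ M₂)) = prodSubmodule (φ₁ N₁) ⊤ := by
    rw [hφx, hφ₂top]
  constructor
  · rintro ⟨hne, hemp, -, hprim⟩
    refine ⟨hN₁, ?_, hs₁, ?_⟩
    · ext x
      simp only [Set.mem_inter_iff, Set.mem_empty_iff_false, iff_false, not_and]
      intro hx hxS
      have : ((x, s₂) : R₁ × R₂) ∈ (↑(δx ((prodSubmodule N₁ (⊤ : Submodule R₂ M₂)).colon ⊤)) : Set (R₁ × R₂)) ∩ (S₁ ×ˢ S₂) := by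
        refine ⟨?_, ⟨hxS, hs₂⟩⟩
        rw [hδcolon]
        exact ⟨hx, trivial⟩
      rw [hemp] at this
      exact this
    · intro a m ham hnam
      have h1 : ((a, (1:R₂)) : R₁ × R₂) • ((m, (0:M₂)) : M₁ × M₂) ∈ prodSubmodule N₁ (⊤ : Submodule R₂ M₂) :=
        ⟨ham, trivial⟩
      have h2 : ((a, (1:R₂)) : R₁ × R₂) • ((m, (0:M₂)) : M₁ × M₂) ∉
          φx (prodSubmodule N₁ (⊤ : Submodule R₂ M₂)) := by
        rw [hφ]
        intro hc
        exact hnam hc.1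
      rcases hprim (a, 1) (m, 0) h1 h2 with h | h
      · exact Or.inl h.1
      · rw [hδcolon] at h
        exact Or.inr h.1
  · rintro ⟨-, hemp, -, hprim⟩
    refine ⟨?_, ?_, ⟨hs₁, hs₂⟩, ?_⟩
    · intro hc
      apply hN₁
      rw [eq_top_iff]
      intro m _
      have : ((m, (0:M₂)) : M₁ × M₂) ∈ prodSubmodule N₁ (⊤ : Submodule R₂ M₂) := by
        rw [hc]; trivial
      exact this.1
    · ext x
      simp only [Set.mem_inter_iff, Set.mem_empty_iff_false, iff_false, not_and]
      intro hx hxS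
      rw [hδcolon] at hx
      have : x.1 ∈ (↑(δ₁ (N₁.colon ⊤)) : Set R₁) ∩ S₁ := ⟨hx.1, hxS.1⟩
      rw [hemp] at this
      exact this
    · rintro ⟨a₁, a₂⟩ ⟨m₁, m₂⟩ ham hnam
      have ham1 : a₁ • m₁ ∈ N₁ := ham.1
      have hnam1 : a₁ • m₁ ∉ φ₁ N₁ := by
        intro hc
        apply hnam
        rw [hφ]
        exact ⟨hc, trivial⟩
      rcases hprim a₁ m₁ ham1 hnam1 with h | h
      · exact Or.inl ⟨h, trivial⟩
      · right
        rw [hδcolon]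
        exact ⟨h, trivial⟩
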